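/- Let X, Z : Ω → ℝ^k and Y : Ω → ℝ^m be integrable random vectors on a probability space such that X is independent of Y and Z is independent of Y. Then for every Lipschitz function h : ℝ^k × ℝ^m → ℝ with Lip(h) ≤ 1, one has |E[h(X,Y)] − E[h(Z,Y)]| ≤ sup{|E[g(X)] − E[g(Z)]| : g : ℝ^k → ℝ Lipschitz with Lip(g) ≤ 1}; that is, d_Wass((X,Y),(Z,Y)) ≤ d_Wass(X,Z). -/

import Mathlib

/-!
By independence the law of `(X, Y)` is the product of the laws of `X` and `Y`, so Fubini gives
`E h(X,Y) - E h(Z,Y) = ∫ (E h(X,y) - E h(Z,y)) dP_Y(y)`. For each fixed `y` the section `h(·, y)`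
is 1-Lipschitz, so the integrand is bounded by the supremum over 1-Lipschitz test functions, and
hence so is its average.
-/

open MeasureTheory ProbabilityTheory Function

lemma LipschitzWith.integrable_comp {α E G : Type*} [MeasurableSpace α] {μ : Measure α}
    [IsFiniteMeasure μ] [NormedAddCommGroup E] [NormedAddCommGroup G] {K : NNReal} {g : E → G}
    (hg : LipschitzWith K g) {f : α → E} (hf : Integrable f μ) : Integrable (fun x => g (f x)) μ := by
  refine ((integrable_const ‖g 0‖).add (hf.norm.const_mul K)).mono'
    (hg.continuous.comp_aestronglyMeasurable hf.1) (.of_forall fun x => ?_)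
  calc ‖g (f x)‖ ≤ ‖g 0‖ + ‖g (f x) - g 0‖ := norm_le_norm_add_norm_sub' _ _
    _ ≤ ‖g 0‖ + K * ‖f x‖ := by simpa using hg.norm_sub_le (f x) 0

lemma LipschitzWith.abs_integral_comp_sub_le {Ω E : Type*} [MeasurableSpace Ω] {P : Measure Ω}
    [IsFiniteMeasure P] [NormedAddCommGroup E] {K : NNReal} {g : E → ℝ} (hg : LipschitzWith K g)
    {X Z : Ω → E} (hX : Integrable X P) (hZ : Integrable Z P) :
    |∫ ω, g (X ω) ∂P - ∫ ω, g (Z ω) ∂P| ≤ K * ∫ ω, ‖X ω - Z ω‖ ∂P := by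
  rw [← integral_sub (hg.integrable_comp hX) (hg.integrable_comp hZ), ← integral_const_mul]
  exact norm_integral_le_of_norm_le ((hX.sub hZ).norm.const_mul K)
    (.of_forall fun ω => hg.norm_sub_le (X ω) (Z ω))

section EuclideanLipschitz

variable {E F : Type*} [NormedAddCommGroup E] [NormedAddCommGroup F] {h : E → F → ℝ}

lemma lipschitzWith_one_left_of_abs_sub_le_sqrt
    (hh : ∀ a a' b b', |h a b - h a' b'| ≤ √(‖a - a'‖ ^ 2 + ‖b - b'‖ ^ 2)) (b : F) :
    LipschitzWith 1 (h · b) :=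
  .of_dist_le_mul fun a a' => by
    simpa [Real.dist_eq, dist_eq_norm, Real.sqrt_sq (norm_nonneg _)] using hh a a' b b

lemma lipschitzWith_two_uncurry_of_abs_sub_le_sqrt
    (hh : ∀ a a' b b', |h a b - h a' b'| ≤ √(‖a - a'‖ ^ 2 + ‖b - b'‖ ^ 2)) :
    LipschitzWith 2 (uncurry h) :=
  .of_dist_le_mul fun p q => by
    have h₁ : ‖p.1 - q.1‖ ≤ dist p q := by
      rw [← dist_eq_norm]; exact le_max_left _ _
    have h₂ : ‖p.2 - q.2‖ ≤ dist p q := by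
      rw [← dist_eq_norm]; exact le_max_right _ _
    have hsqrt : √(‖p.1 - q.1‖ ^ 2 + ‖p.2 - q.2‖ ^ 2) ≤ 2 * dist p q := by
      rw [Real.sqrt_le_left (by positivity)]
      nlinarith [norm_nonneg (p.1 - q.1), norm_nonneg (p.2 - q.2)]
    rw [Real.dist_eq]
    exact (hh p.1 q.1 p.2 q.2).trans hsqrt

end EuclideanLipschitz

namespace ProbabilityTheory

variable {Ω E F : Type*} [MeasurableSpace Ω] {P : Measure Ω} [IsFiniteMeasure P]
  [MeasurableSpace E] [MeasurableSpace F] {W : Ω → E} {Y : Ω → F} {Φ : E → F → ℝ}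

lemma IndepFun.integrable_uncurry_map_prod_map (hWY : IndepFun W Y P) (hW : AEMeasurable W P)
    (hY : AEMeasurable Y P) (hΦm : AEStronglyMeasurable (uncurry Φ) ((P.map W).prod (P.map Y)))
    (hΦ : Integrable (fun ω => Φ (W ω) (Y ω)) P) :
    Integrable (uncurry Φ) ((P.map W).prod (P.map Y)) := by
  rw [← hWY.map_prod_eq_prod_map_map hW hY] at hΦm ⊢
  exact (integrable_map_measure hΦm (hW.prodMk hY)).2 hΦ

lemma IndepFun.integral_comp_eq_integral_integral (hWY : IndepFun W Y P) (hW : AEMeasurable W P)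
    (hY : AEMeasurable Y P) (hΦ : Integrable (uncurry Φ) ((P.map W).prod (P.map Y))) :
    ∫ ω, Φ (W ω) (Y ω) ∂P = ∫ y, ∫ x, Φ x y ∂(P.map W) ∂(P.map Y) := by
  have hmap := hWY.map_prod_eq_prod_map_map hW hY
  calc ∫ ω, Φ (W ω) (Y ω) ∂P = ∫ z, uncurry Φ z ∂(P.map fun ω => (W ω, Y ω)) :=
        (integral_map (hW.prodMk hY) (hmap ▸ hΦ.1)).symm
    _ = _ := by rw [hmap]; exact integral_prod_symm _ hΦ

end ProbabilityTheory

theorem stmt9 {Ω : Type*} [MeasurableSpace Ω] (P : Measure Ω) [IsProbabilityMeasure P]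
    (k m : ℕ)
    (X Z : Ω → EuclideanSpace ℝ (Fin k)) (Y : Ω → EuclideanSpace ℝ (Fin m))
    (hXi : Integrable X P) (hZi : Integrable Z P) (hYi : Integrable Y P)
    (hXY : IndepFun X Y P) (hZY : IndepFun Z Y P) :
    ∀ h : EuclideanSpace ℝ (Fin k) → EuclideanSpace ℝ (Fin m) → ℝ,
      (∀ a a' b b', |h a b - h a' b'| ≤ Real.sqrt (‖a - a'‖ ^ 2 + ‖b - b'‖ ^ 2)) →
      |(∫ ω, h (X ω) (Y ω) ∂P) - ∫ ω, h (Z ω) (Y ω) ∂P|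
        ≤ sSup {c : ℝ | ∃ g : EuclideanSpace ℝ (Fin k) → ℝ, LipschitzWith 1 g ∧
            c = |(∫ ω, g (X ω) ∂P) - ∫ ω, g (Z ω) ∂P|} := by
  intro h hh
  set S := {c : ℝ | ∃ g : EuclideanSpace ℝ (Fin k) → ℝ, LipschitzWith 1 g ∧
    c = |(∫ ω, g (X ω) ∂P) - ∫ ω, g (Z ω) ∂P|}
  have hS : BddAbove S := ⟨∫ ω, ‖X ω - Z ω‖ ∂P, by
    rintro _ ⟨g, hg, rfl⟩
    simpa using hg.abs_integral_comp_sub_le hXi hZi⟩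
  have hslice (y) : |∫ x, h x y ∂P.map X - ∫ x, h x y ∂P.map Z| ≤ sSup S := by
    have hy := lipschitzWith_one_left_of_abs_sub_le_sqrt hh y
    rw [integral_map hXi.aemeasurable hy.continuous.aestronglyMeasurable,
      integral_map hZi.aemeasurable hy.continuous.aestronglyMeasurable]
    exact le_csSup hS ⟨_, hy, rfl⟩
  have hlip := lipschitzWith_two_uncurry_of_abs_sub_le_sqrt hh
  have hint (W) (hW : Integrable W P) (hWY : IndepFun W Y P) :
      Integrable (uncurry h) ((P.map W).prod (P.map Y)) :=
    hWY.integrable_uncurry_map_prod_map hW.aemeasurable hYi.aemeasurable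
      hlip.continuous.aestronglyMeasurable (hlip.integrable_comp (hW.prodMk hYi))
  rw [hXY.integral_comp_eq_integral_integral hXi.aemeasurable hYi.aemeasurable (hint X hXi hXY),
    hZY.integral_comp_eq_integral_integral hZi.aemeasurable hYi.aemeasurable (hint Z hZi hZY),
    ← integral_sub ?_ ?_]
  · have := Measure.isProbabilityMeasure_map (μ := P) hYi.aemeasurable
    simpa using norm_integral_le_of_norm_le_const (μ := P.map Y)
      (.of_forall fun y => (Real.norm_eq_abs _).trans_le (hslice y))
  exacts [(hint X hXi hXY).integral_prod_right, (hint Z hZi hZY).integral_prod_right]
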